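/- arXiv:0906.4321 — 8 statements merged into one kernel-verified Lean document; each statement's English description precedes it below -/
import Mathlib

section
/- In any extended awareness structure M whose possibility relations K_i are Euclidean, for every world s and every formula φ: (M,s) satisfies K_i(φ ∨ ¬φ) if and only if (M,s) satisfies K_i φ ∨ K_i ¬K_i φ. -/
namespace AwarenessPaper

/-- Formulas of the language `ℒ^{∀,K,X,A}_n(Φ,𝒳)` with `Φ = ℕ` (countably infinite
set of primitive propositions) and variables indexed by `ℕ`; agents indexed by `ℕ`. -/
inductive Fm : Type
  | prop : ℕ → Fm
  | var  : ℕ → Fm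
  | neg  : Fm → Fm
  | and  : Fm → Fm → Fm
  | k    : ℕ → Fm → Fm
  | a    : ℕ → Fm → Fm
  | x    : ℕ → Fm → Fm
  | all  : ℕ → Fm → Fm

namespace Fm

/-- Primitive propositions occurring in a formula. -/
def props : Fm → Set ℕ
  | .prop p => {p}
  | .var _ => ∅
  | .neg φ => props φ
  | .and φ ψ => props φ ∪ props ψ
  | .k _ φ => props φ
  | .a _ φ => props φ
  | .x _ φ => props φ
  | .all _ φ => props φ

/-- Free variables of a formula. -/
def free : Fm → Set ℕ
  | .prop _ => ∅
  | .var v => {v}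
  | .neg φ => free φ
  | .and φ ψ => free φ ∪ free ψ
  | .k _ φ => free φ
  | .a _ φ => free φ
  | .x _ φ => free φ
  | .all v φ => free φ \ {v}

/-- All variables occurring in a formula (free or bound). -/
def vars : Fm → Set ℕ
  | .prop _ => ∅
  | .var v => {v}
  | .neg φ => vars φ
  | .and φ ψ => vars φ ∪ vars ψ
  | .k _ φ => vars φ
  | .a _ φ => vars φ
  | .x _ φ => vars φ
  | .all v φ => insert v (vars φ)

/-- Quantifier nesting depth; a formula is quantifier-free iff `qcount φ = 0`. -/
def qcount : Fm → ℕ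
  | .prop _ => 0
  | .var _ => 0
  | .neg φ => qcount φ
  | .and φ ψ => max (qcount φ) (qcount ψ)
  | .k _ φ => qcount φ
  | .a _ φ => qcount φ
  | .x _ φ => qcount φ
  | .all _ φ => qcount φ + 1

/-- `substV v ψ φ` is `φ[x_v/ψ]`: replace free occurrences of variable `v` by `ψ`. -/
def substV (v : ℕ) (ψ : Fm) : Fm → Fm
  | .prop p => .prop p
  | .var u => if u = v then ψ else .var u
  | .neg φ => .neg (substV v ψ φ)
  | .and φ₁ φ₂ => .and (substV v ψ φ₁) (substV v ψ φ₂)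
  | .k i φ => .k i (substV v ψ φ)
  | .a i φ => .a i (substV v ψ φ)
  | .x i φ => .x i (substV v ψ φ)
  | .all u φ => if u = v then .all u φ else .all u (substV v ψ φ)

/-- `substP q ψ φ` is `φ[q/ψ]`: replace the primitive proposition `q` by `ψ`. -/
def substP (q : ℕ) (ψ : Fm) : Fm → Fm
  | .prop p => if p = q then ψ else .prop p
  | .var u => .var u
  | .neg φ => .neg (substP q ψ φ)
  | .and φ₁ φ₂ => .and (substP q ψ φ₁) (substP q ψ φ₂)
  | .k i φ => .k i (substP q ψ φ)
  | .a i φ => .a i (substP q ψ φ)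
  | .x i φ => .x i (substP q ψ φ)
  | .all u φ => .all u (substP q ψ φ)

/-- Rename primitive propositions along `τ`. -/
def rename (τ : ℕ → ℕ) : Fm → Fm
  | .prop p => .prop (τ p)
  | .var u => .var u
  | .neg φ => .neg (rename τ φ)
  | .and φ₁ φ₂ => .and (rename τ φ₁) (rename τ φ₂)
  | .k i φ => .k i (rename τ φ)
  | .a i φ => .a i (rename τ φ)
  | .x i φ => .x i (rename τ φ)
  | .all u φ => .all u (rename τ φ)

def or (φ ψ : Fm) : Fm := .neg (.and (.neg φ) (.neg ψ))
def imp (φ ψ : Fm) : Fm := Fm.or (.neg φ) ψ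
def iff (φ ψ : Fm) : Fm := .and (imp φ ψ) (imp ψ φ)
/-- `A_i^* φ`, an abbreviation for `K_i (φ ∨ ¬φ)`. -/
def astar (i : ℕ) (φ : Fm) : Fm := .k i (Fm.or φ (.neg φ))

end Fm

/-- An extended awareness structure for agents `ℕ` over `Φ = ℕ`, with set of worlds `W`:
each world has a nonempty local language `L s`, a valuation, possibility relations `R i`,
and awareness sets `Aw i s` consisting of formulas over the local language. -/
structure EAS (W : Type) where
  L : W → Set ℕ
  L_ne : ∀ s, (L s).Nonempty
  val : W → ℕ → Bool
  R : ℕ → W → W → Prop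
  Aw : ℕ → W → Set Fm
  Aw_lang : ∀ i s, ∀ φ ∈ Aw i s, Fm.props φ ⊆ L s

namespace EAS

variable {W : Type}

/-- One level of the truth definition; `univ` interprets the bodies of quantifiers
(at one lower quantifier depth).  A formula is true at `s` only if its primitive
propositions all belong to the local language `L s`. -/
def satAux (M : EAS W) (univ : W → Fm → Prop) : W → Fm → Prop
  | s, .prop p => p ∈ M.L s ∧ M.val s p = true
  | _, .var _ => False
  | s, .neg φ => Fm.props φ ⊆ M.L s ∧ ¬ satAux M univ s φ
  | s, .and φ ψ => satAux M univ s φ ∧ satAux M univ s ψ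
  | s, .k i φ => Fm.props φ ⊆ M.L s ∧ ∀ t, M.R i s t → satAux M univ t φ
  | s, .a i φ => φ ∈ M.Aw i s
  | s, .x i φ => (Fm.props φ ⊆ M.L s ∧ ∀ t, M.R i s t → satAux M univ t φ) ∧ φ ∈ M.Aw i s
  | s, .all v φ => Fm.props φ ⊆ M.L s ∧
      ∀ β : Fm, Fm.qcount β = 0 → Fm.free β = ∅ → Fm.props β ⊆ M.L s →
        univ s (Fm.substV v β φ)

/-- Truth with quantifier-depth budget `n`. -/
def satN (M : EAS W) : ℕ → W → Fm → Prop
  | 0 => M.satAux fun _ _ => False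
  | n + 1 => M.satAux (M.satN n)

/-- `(M,s) ⊨ φ`. Quantifiers range over quantifier-free sentences of the local language. -/
def sat (M : EAS W) (s : W) (φ : Fm) : Prop := M.satN (Fm.qcount φ) s φ

/-- Awareness is generated by primitive propositions. -/
def agpp (M : EAS W) : Prop :=
  ∀ i s (φ : Fm), φ ∈ M.Aw i s ↔ ∀ p ∈ Fm.props φ, Fm.prop p ∈ M.Aw i s

/-- Agents know what they are aware of. -/
def ka (M : EAS W) : Prop := ∀ i s t, M.R i s t → M.Aw i s = M.Aw i t

end EAS

/-- (Weak) validity in the class `𝒩_n(Φ,𝒳)` of all extended awareness structures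
satisfying agpp and ka: truth at every world whose local language contains all the
primitive propositions of the formula. -/
def Valid (φ : Fm) : Prop :=
  ∀ (W : Type) (M : EAS W), M.agpp → M.ka → ∀ s : W, Fm.props φ ⊆ M.L s → M.sat s φ

/-
Idea: `K_i(φ ∨ ¬φ)` only says that `φ` belongs to the language of `s` and of every
`K_i`-successor of `s`, since there `φ ∨ ¬φ` is true as soon as it is expressible. If `K_i φ`
fails, some successor `t₀` refutes `φ`; by Euclideanness `t₀` is a successor of every successor
`t` of `s`, so `¬K_i φ` holds at each such `t` and hence `K_i ¬K_i φ` at `s`. Conversely both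
disjuncts of `A_i' φ` force `φ` into the language of every successor.
Only non-quantifier connectives are unfolded, so the argument runs for `satAux` with an
arbitrary interpretation of quantifier bodies; `satN` at every depth is such an instance.
-/

theorem Fm.props_or (φ ψ : Fm) : (φ.or ψ).props = φ.props ∪ ψ.props := rfl

namespace EAS

variable {W : Type} (M : EAS W) (univ : W → Fm → Prop)

theorem props_subset_of_satAux : ∀ (φ : Fm) (s : W), M.satAux univ s φ → φ.props ⊆ M.L s
  | .prop _, _, h => Set.singleton_subset_iff.mpr h.1
  | .var _, _, h => h.elim
  | .neg _, _, h => h.1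
  | .and φ ψ, s, h =>
      Set.union_subset (props_subset_of_satAux φ s h.1) (props_subset_of_satAux ψ s h.2)
  | .k _ _, _, h => h.1
  | .a i φ, s, h => M.Aw_lang i s φ h
  | .x _ _, _, h => h.1.1
  | .all _ _, _, h => h.1

theorem satAux_or_iff (s : W) (φ ψ : Fm) :
    M.satAux univ s (φ.or ψ) ↔
      φ.props ⊆ M.L s ∧ ψ.props ⊆ M.L s ∧ (M.satAux univ s φ ∨ M.satAux univ s ψ) := by
  simp only [Fm.or, satAux, Fm.props, Set.union_subset_iff]
  tauto

theorem satAux_astar_iff (i : ℕ) (s : W) (φ : Fm) :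
    M.satAux univ s (φ.astar i) ↔ φ.props ⊆ M.L s ∧ ∀ t, M.R i s t → φ.props ⊆ M.L t := by
  simp only [Fm.astar, satAux.eq_5, satAux_or_iff, Fm.props_or, Fm.props, Set.union_subset_iff,
    and_self, satAux.eq_3]
  exact and_congr_right fun _ => forall₂_congr fun t _ =>
    ⟨And.left, fun h => ⟨h, h, or_iff_not_imp_left.mpr fun hn => ⟨h, hn⟩⟩⟩

theorem satAux_astar_iff_or_k_neg_k (i : ℕ) (s : W) (φ : Fm)
    (heu : ∀ t u, M.R i s t → M.R i s u → M.R i t u) :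
    M.satAux univ s (φ.astar i) ↔ M.satAux univ s ((Fm.k i φ).or (.k i (.neg (.k i φ)))) := by
  simp only [satAux_astar_iff, satAux_or_iff, satAux, Fm.props]
  constructor
  · rintro ⟨hs, hsucc⟩
    refine ⟨hs, hs, ?_⟩
    by_cases hk : ∀ t, M.R i s t → M.satAux univ t φ
    · exact Or.inl ⟨hs, hk⟩
    · push Not at hk
      obtain ⟨t₀, hst₀, hnt₀⟩ := hk
      exact Or.inr ⟨hs, fun t hst => ⟨hsucc t hst, fun hkt => hnt₀ (hkt.2 t₀ (heu t t₀ hst hst₀))⟩⟩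
  · rintro ⟨hs, -, hk | hnk⟩
    · exact ⟨hs, fun t hst => M.props_subset_of_satAux univ φ t (hk.2 t hst)⟩
    · exact ⟨hs, fun t hst => (hnk.2 t hst).1⟩

theorem exists_satN_eq_satAux : ∀ n : ℕ, ∃ univ, M.satN n = M.satAux univ
  | 0 => ⟨_, rfl⟩
  | _ + 1 => ⟨_, rfl⟩

end EAS

/-- In any extended awareness structure whose possibility relations are Euclidean,
`A_i^* φ = K_i(φ ∨ ¬φ)` is equivalent to `A_i' φ = K_i φ ∨ K_i ¬K_i φ` at every world. -/
theorem stmt0 {W : Type} (M : EAS W)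
    (heu : ∀ (i : ℕ) (s t u : W), M.R i s t → M.R i s u → M.R i t u)
    (i : ℕ) (s : W) (φ : Fm) :
    M.sat s (Fm.astar i φ) ↔ M.sat s (Fm.or (.k i φ) (.k i (.neg (.k i φ)))) := by
  have hq₁ : (φ.astar i).qcount = φ.qcount := by simp [Fm.astar, Fm.or, Fm.qcount]
  have hq₂ : ((Fm.k i φ).or (.k i (.neg (.k i φ)))).qcount = φ.qcount := by
    simp [Fm.or, Fm.qcount]
  obtain ⟨univ, huniv⟩ := M.exists_satN_eq_satAux φ.qcount
  rw [EAS.sat, EAS.sat, hq₁, hq₂, huniv]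
  exact M.satAux_astar_iff_or_k_neg_k univ i s φ (heu i s)

end AwarenessPaper
end

section
/- In any extended awareness structure whose possibility relations are transitive, the axiom XA* is valid: for every world s where the formula is defined, if (M,s) ⊨ K_i(φ ∨ ¬φ) then (M,s) ⊨ K_i K_i(φ ∨ ¬φ). -/
namespace AwarenessPaper

/-! A formula that holds at a world is defined there: all its primitive propositions lie in
the local language. So if `K_i ψ` holds at `s`, then `ψ` is defined at every `K_i`-successor,
and by transitivity it holds at every successor of a successor; that is, `K_i ψ` holds at every
successor, which is `K_i K_i ψ` at `s`. The theorem is this positive introspection for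
`ψ = φ ∨ ¬φ`. -/

namespace EAS

variable {W : Type} (M : EAS W)

theorem props_subset_L_of_satAux {univ : W → Fm → Prop} {t : W} :
    ∀ {ψ : Fm}, M.satAux univ t ψ → Fm.props ψ ⊆ M.L t
  | .prop _, h => Set.singleton_subset_iff.mpr h.1
  | .var _, h => h.elim
  | .neg _, h => h.1
  | .and _ _, h => Set.union_subset (props_subset_L_of_satAux h.1) (props_subset_L_of_satAux h.2)
  | .k _ _, h => h.1
  | .a i ψ, h => M.Aw_lang i t ψ h
  | .x _ _, h => h.1.1
  | .all _ _, h => h.1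

theorem satAux_k_k_of_satAux_k {i : ℕ}
    (htr : ∀ s t u : W, M.R i s t → M.R i t u → M.R i s u) {univ : W → Fm → Prop} {s : W} {ψ : Fm} (h : M.satAux univ s (.k i ψ)) :
    M.satAux univ s (.k i (.k i ψ)) :=
  ⟨h.1, fun t hst =>
    ⟨M.props_subset_L_of_satAux (h.2 t hst), fun u htu => h.2 u (htr s t u hst htu)⟩⟩

theorem sat_k_k_of_sat_k {i : ℕ} (htr : ∀ s t u : W, M.R i s t → M.R i t u → M.R i s u)
    {s : W} {ψ : Fm} (h : M.sat s (.k i ψ)) : M.sat s (.k i (.k i ψ)) := by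
  change M.satN ψ.qcount s _ at h ⊢
  revert h
  -- whatever the quantifier budget, `satN` is `satAux` for some interpretation of quantifiers
  cases ψ.qcount <;> exact M.satAux_k_k_of_satAux_k htr

end EAS

theorem stmt1_general {W : Type} (M : EAS W)
    (htr : ∀ (i : ℕ) (s t u : W), M.R i s t → M.R i t u → M.R i s u)
    (i : ℕ) (φ : Fm) (s : W)
    (h : M.sat s (Fm.astar i φ)) :
    M.sat s (.k i (Fm.astar i φ)) :=
  M.sat_k_k_of_sat_k (htr i) h

/-- XA*: in transitive structures, `A_i^* φ ⇒ K_i A_i^* φ` is valid. -/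
theorem stmt1 {W : Type} (M : EAS W)
    (htr : ∀ (i : ℕ) (s t u : W), M.R i s t → M.R i t u → M.R i s u)
    (i : ℕ) (φ : Fm) (s : W) (hdef : Fm.props φ ⊆ M.L s)
    (h : M.sat s (Fm.astar i φ)) :
    M.sat s (.k i (Fm.astar i φ)) :=
  stmt1_general M htr i φ s h

end AwarenessPaper
end

section
/- In any extended awareness structure whose possibility relations are Euclidean, the axiom 5* is valid: at every world s where the formulas are defined, if (M,s) ⊨ ¬K_i φ ∧ K_i(φ ∨ ¬φ) then (M,s) ⊨ K_i ¬K_i φ. -/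
namespace AwarenessPaper

namespace EAS

variable {W : Type} (M : EAS W)

theorem satN_eq_satAux (n : ℕ) : ∃ univ, M.satN n = M.satAux univ := by
  cases n <;> exact ⟨_, rfl⟩

theorem props_subset_of_satAux_or_neg {univ : W → Fm → Prop} {s : W} {φ : Fm}
    (h : M.satAux univ s (Fm.or φ (.neg φ))) : Fm.props φ ⊆ M.L s := by
  simpa only [Fm.props, Set.union_self] using h.1

theorem satAux_k_neg_k {univ : W → Fm → Prop} {i : ℕ} {φ : Fm} {s : W}
    (heu : ∀ t u, M.R i s t → M.R i s u → M.R i t u)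
    (hnk : M.satAux univ s (.neg (.k i φ))) (haw : M.satAux univ s (Fm.astar i φ)) :
    M.satAux univ s (.k i (.neg (.k i φ))) := by
  refine ⟨hnk.1, fun t hst => ⟨M.props_subset_of_satAux_or_neg (φ := φ) (haw.2 t hst), ?_⟩⟩
  -- If `K_i φ` held at `t`, every successor `u` of `s` is a successor of `t`, so `K_i φ` at `s`.
  rintro ⟨-, hφt⟩
  exact hnk.2 ⟨hnk.1, fun u hsu => hφt u (heu t u hst hsu)⟩

end EAS

/-- 5*: in Euclidean structures, `(¬K_i φ ∧ A_i^* φ) ⇒ K_i ¬K_i φ` is valid. -/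
theorem stmt2 {W : Type} (M : EAS W)
    (heu : ∀ (i : ℕ) (s t u : W), M.R i s t → M.R i s u → M.R i t u)
    (i : ℕ) (φ : Fm) (s : W)
    (h : M.sat s (Fm.and (.neg (.k i φ)) (Fm.astar i φ))) :
    M.sat s (.k i (.neg (.k i φ))) := by
  have hq : Fm.qcount (Fm.and (.neg (.k i φ)) (Fm.astar i φ)) = Fm.qcount φ := by
    simp [Fm.qcount, Fm.astar, Fm.or]
  obtain ⟨univ, hsat⟩ := M.satN_eq_satAux (Fm.qcount φ)
  rw [EAS.sat, hq, hsat] at h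
  rw [EAS.sat, Fm.qcount, Fm.qcount, Fm.qcount, hsat]
  exact M.satAux_k_neg_k (heu i s) h.1 h.2

end AwarenessPaper
end

section
/- In any extended awareness structure whose possibility relations are reflexive and Euclidean, the axiom FA* is valid: at every world s, if for every primitive proposition p ∈ L(s) there exists a K_i-successor t of s with p ∉ L(t) (i.e., agent i is 'aware*' of no proposition), then at every K_i-successor u of s, for every primitive proposition q ∈ L(u) there exists a K_i-successor of u whose language omits q. -/
namespace AwarenessPaper

/-- FA*: in reflexive Euclidean structures, if agent `i` is aware* of no primitive
proposition at `s` (every `p ∈ L(s)` fails at some successor), then the same holds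
at every `K_i`-successor of `s`. -/
theorem stmt3 {W : Type} (M : EAS W) (i : ℕ)
    (hrefl : ∀ s : W, M.R i s s)
    (heu : ∀ s t u : W, M.R i s t → M.R i s u → M.R i t u)
    (s : W) (h : ∀ p ∈ M.L s, ∃ t, M.R i s t ∧ p ∉ M.L t) :
    ∀ u, M.R i s u → ∀ q ∈ M.L u, ∃ t, M.R i u t ∧ q ∉ M.L t := by
  intro u hsu q _
  by_cases hqs : q ∈ M.L s
  · obtain ⟨t, hst, hqt⟩ := h q hqs
    exact ⟨t, heu s u t hsu hst, hqt⟩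
  · exact ⟨s, heu s u s hsu (hrefl s), hqs⟩

end AwarenessPaper
end

section
/- (Weak Substitution) If Φ is countably infinite and the sentence φ is valid in the class of all extended awareness structures over Φ (satisfying agpp and ka), then for any primitive proposition q and any quantifier-free sentence ψ not mentioning q, the sentence φ[q/ψ] (φ with q replaced by ψ) is also valid in this class. -/
/-!
Let `f` send each primitive proposition to a closed quantifier-free formula. Any structure `M`
pulls back along `f` to a structure in which `p` means what `f p` means in `M`; it again
satisfies agpp and ka, and a formula `χ` holds in it exactly where `χ` with every `p` replaced by
`f p` holds in `M`. In the quantifier case the sentences of the two local languages must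
correspond, which holds as soon as every atom is some `f p`. As `φ` has finitely many atoms and
`Φ` is infinite, such an `f` can be chosen to agree with `[q/ψ]` on the atoms of `φ`.
-/

namespace AwarenessPaper

namespace Fm

def bind (f : ℕ → Fm) : Fm → Fm
  | .prop p => f p
  | .var u => .var u
  | .neg φ => .neg (bind f φ)
  | .and φ₁ φ₂ => .and (bind f φ₁) (bind f φ₂)
  | .k i φ => .k i (bind f φ)
  | .a i φ => .a i (bind f φ)
  | .x i φ => .x i (bind f φ)
  | .all u φ => .all u (bind f φ)

theorem props_finite (χ : Fm) : (props χ).Finite := by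
  induction χ <;> simp_all [props]

theorem qcount_substV_le {β : Fm} (hβ : qcount β = 0) (v : ℕ) (χ : Fm) :
    qcount (substV v β χ) ≤ qcount χ := by
  induction χ with
  | var u => by_cases h : u = v <;> simp [substV, h, qcount, hβ]
  | and χ₁ χ₂ ih₁ ih₂ => exact max_le_max ih₁ ih₂
  | all u χ ih => by_cases h : u = v <;> simp [substV, h, qcount, ih]
  | _ => simp_all [substV, qcount]

theorem substV_eq_self {v : ℕ} {χ : Fm} (β : Fm) (h : v ∉ free χ) : substV v β χ = χ := by
  induction χ with
  | var u => simp_all [substV, free, eq_comm]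
  | and χ₁ χ₂ ih₁ ih₂ => simp_all [substV, free]
  | all u χ ih =>
    by_cases huv : u = v
    · simp [substV, huv]
    · simp only [free, Set.mem_sdiff, Set.mem_singleton_iff, not_and, not_not] at h
      simp [substV, huv, ih fun hv => huv (h hv).symm]
  | _ => simp_all [substV, free]

theorem props_bind (f : ℕ → Fm) (χ : Fm) : props (bind f χ) = ⋃ p ∈ props χ, props (f p) := by
  induction χ with
  | and _ _ ih₁ ih₂ => rw [bind, props, props, ih₁, ih₂, Set.biUnion_union]
  | _ => simp_all [bind, props]

theorem props_bind_subset_iff {f : ℕ → Fm} {χ : Fm} {S : Set ℕ} :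
    props (bind f χ) ⊆ S ↔ ∀ p ∈ props χ, props (f p) ⊆ S := by
  rw [props_bind, Set.iUnion₂_subset_iff]

theorem qcount_bind {f : ℕ → Fm} (hf : ∀ p, qcount (f p) = 0) (χ : Fm) :
    qcount (bind f χ) = qcount χ := by
  induction χ <;> simp_all [bind, qcount]

theorem free_bind {f : ℕ → Fm} (hf : ∀ p, free (f p) = ∅) (χ : Fm) :
    free (bind f χ) = free χ := by
  induction χ <;> simp_all [bind, free]

theorem bind_substV {f : ℕ → Fm} (hf : ∀ p, free (f p) = ∅) (v : ℕ) (β χ : Fm) :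
    bind f (substV v β χ) = substV v (bind f β) (bind f χ) := by
  induction χ with
  | prop p => simp [substV, bind, substV_eq_self, hf]
  | var u => by_cases h : u = v <;> simp [substV, bind, h]
  | all u χ ih => by_cases h : u = v <;> simp [substV, bind, h, ih]
  | _ => simp_all [substV, bind]

theorem bind_bind (f g : ℕ → Fm) (χ : Fm) :
    bind f (bind g χ) = bind (fun p => bind f (g p)) χ := by
  induction χ <;> simp_all [bind]

theorem bind_prop_left (χ : Fm) : bind prop χ = χ := by
  induction χ <;> simp_all [bind]

theorem bind_congr {f g : ℕ → Fm} {χ : Fm} (h : ∀ p ∈ props χ, f p = g p) :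
    bind f χ = bind g χ := by
  induction χ <;> simp_all [bind, props]

theorem substP_eq_bind (q : ℕ) (ψ : Fm) :
    substP q ψ = bind fun p => if p = q then ψ else .prop p := by
  funext χ
  induction χ <;> simp_all [substP, bind]

end Fm

namespace EAS

open Fm

variable {W : Type} (M : EAS W)

theorem props_subset_L_of_satAux_s4 {u : W → Fm → Prop} {t : W} {χ : Fm} (h : M.satAux u t χ) :
    props χ ⊆ M.L t := by
  induction χ generalizing t with
  | prop p => simpa [props] using h.1
  | var => exact h.elim
  | and χ₁ χ₂ ih₁ ih₂ => exact Set.union_subset (ih₁ h.1) (ih₂ h.2)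
  | a i χ => exact M.Aw_lang i t χ h
  | x => exact h.1.1
  | neg | k | all => exact h.1

theorem satAux_congr_of_qcount_eq_zero (u u' : W → Fm → Prop) {χ : Fm} (hχ : qcount χ = 0)
    (t : W) : M.satAux u t χ ↔ M.satAux u' t χ := by
  induction χ generalizing t with
  | neg χ ih => exact and_congr Iff.rfl (not_congr (ih hχ t))
  | and χ₁ χ₂ ih₁ ih₂ =>
    simp only [qcount, Nat.max_eq_zero_iff] at hχ
    exact and_congr (ih₁ hχ.1 t) (ih₂ hχ.2 t)
  | k i χ ih => exact and_congr Iff.rfl (forall₂_congr fun t' _ => ih hχ t')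
  | x i χ ih => exact and_congr (and_congr Iff.rfl (forall₂_congr fun t' _ => ih hχ t')) Iff.rfl
  | all => simp [qcount] at hχ
  | prop | var | a => rfl

noncomputable def pullback (f : ℕ → Fm) (hf : ∀ r, ∃ p, f p = .prop r) : EAS W where
  L t := {p | props (f p) ⊆ M.L t}
  L_ne s := by
    obtain ⟨r, hr⟩ := M.L_ne s
    obtain ⟨p, hp⟩ := hf r
    exact ⟨p, by simpa [hp, props] using hr⟩
  val t p := @decide (M.satN 0 t (f p)) (Classical.propDecidable _)
  R := M.R
  Aw i t := {χ | ∀ p ∈ props χ, ∀ r ∈ props (f p), .prop r ∈ M.Aw i t}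
  Aw_lang i t χ h p hp r hr := by simpa [props] using M.Aw_lang i t _ (h p hp r hr)

variable {f : ℕ → Fm} (hf : ∀ r, ∃ p, f p = .prop r)

theorem pullback_agpp : (M.pullback f hf).agpp := by
  intro i t χ
  simp [pullback, props]

theorem pullback_ka (hka : M.ka) : (M.pullback f hf).ka := by
  intro i s t hst
  simp only [pullback, hka i s t hst]

theorem props_subset_pullback_L_iff {χ : Fm} {t : W} :
    props χ ⊆ (M.pullback f hf).L t ↔ props (bind f χ) ⊆ M.L t := by
  rw [props_bind_subset_iff]
  rfl

theorem mem_pullback_Aw_iff (hM : M.agpp) {χ : Fm} {i : ℕ} {t : W} :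
    χ ∈ (M.pullback f hf).Aw i t ↔ bind f χ ∈ M.Aw i t := by
  simp only [hM i t (bind f χ), props_bind, Set.mem_iUnion₂]
  exact ⟨fun h r ⟨p, hp, hr⟩ => h p hp r hr, fun h p hp r hr => h r ⟨p, hp, hr⟩⟩

theorem pullback_satAux_prop (hqf : ∀ p, qcount (f p) = 0) (u u' : W → Fm → Prop) (t : W)
    (p : ℕ) : (M.pullback f hf).satAux u t (.prop p) ↔ M.satAux u' t (f p) := by
  rw [M.satAux_congr_of_qcount_eq_zero u' (fun _ _ => False) (hqf p)]
  simp only [satAux, pullback, Set.mem_ofPred_eq, decide_eq_true_eq]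
  exact ⟨And.right, fun h => ⟨M.props_subset_L_of_satAux_s4 h, h⟩⟩

theorem forall_sentence_pullback_iff (hqf : ∀ p, qcount (f p) = 0) (hcl : ∀ p, free (f p) = ∅)
    (t : W) (P : Fm → Prop) :
    (∀ β : Fm, qcount β = 0 → free β = ∅ → props β ⊆ (M.pullback f hf).L t → P (bind f β)) ↔
      ∀ γ : Fm, qcount γ = 0 → free γ = ∅ → props γ ⊆ M.L t → P γ := by
  refine ⟨fun h γ hγq hγf hγL => ?_, fun h β hβq hβf hβL => ?_⟩
  · choose σ hσ using id hf
    have hbind : Fm.bind f (Fm.bind (fun r => .prop (σ r)) γ) = γ := by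
      rw [bind_bind, show (fun r => Fm.bind f (.prop (σ r))) = prop from funext hσ, bind_prop_left]
    have hren_q := qcount_bind (fun r => rfl : ∀ r, qcount (.prop (σ r)) = 0) γ
    have hren_f := free_bind (fun r => rfl : ∀ r, free (.prop (σ r)) = ∅) γ
    have hren := h _ (hren_q.trans hγq) (hren_f.trans hγf)
      ((M.props_subset_pullback_L_iff hf).2 (by rwa [hbind]))
    rwa [hbind] at hren
  · exact h _ ((qcount_bind hqf β).trans hβq) ((free_bind hcl β).trans hβf)
      ((M.props_subset_pullback_L_iff hf).1 hβL)

theorem pullback_satAux_iff (hqf : ∀ p, qcount (f p) = 0) (hcl : ∀ p, free (f p) = ∅)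
    (hM : M.agpp) {u u' : W → Fm → Prop} {m : ℕ}
    (hu : ∀ s δ, qcount δ ≤ m → (u s δ ↔ u' s (bind f δ))) {χ : Fm} (hχ : qcount χ ≤ m + 1)
    (t : W) : (M.pullback f hf).satAux u t χ ↔ M.satAux u' t (bind f χ) := by
  induction χ generalizing t with
  | prop p => exact M.pullback_satAux_prop hf hqf u u' t p
  | var => rfl
  | neg χ ih =>
    exact and_congr (M.props_subset_pullback_L_iff hf) (not_congr (ih hχ t))
  | and χ₁ χ₂ ih₁ ih₂ =>
    simp only [qcount, max_le_iff] at hχ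
    exact and_congr (ih₁ hχ.1 t) (ih₂ hχ.2 t)
  | k i χ ih =>
    exact and_congr (M.props_subset_pullback_L_iff hf) (forall₂_congr fun t' _ => ih hχ t')
  | a i χ => exact M.mem_pullback_Aw_iff hf hM
  | x i χ ih =>
    exact and_congr (and_congr (M.props_subset_pullback_L_iff hf)
      (forall₂_congr fun t' _ => ih hχ t')) (M.mem_pullback_Aw_iff hf hM)
  | all v χ ih =>
    have hχm : qcount χ ≤ m := Nat.le_of_succ_le_succ hχ
    refine and_congr (M.props_subset_pullback_L_iff hf) ?_
    have hbody : ∀ β, qcount β = 0 →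
        (u t (substV v β χ) ↔ u' t (substV v (bind f β) (bind f χ))) := fun β hβ => by
      rw [← bind_substV hcl]
      exact hu t _ ((qcount_substV_le hβ v χ).trans hχm)
    rw [← M.forall_sentence_pullback_iff hf hqf hcl t]
    exact forall_congr' fun β => forall_congr' fun hβ => forall₂_congr fun _ _ => hbody β hβ

theorem pullback_satN_iff (hqf : ∀ p, qcount (f p) = 0) (hcl : ∀ p, free (f p) = ∅)
    (hM : M.agpp) (n : ℕ) {χ : Fm} (hχ : qcount χ ≤ n) (t : W) :
    (M.pullback f hf).satN n t χ ↔ M.satN n t (bind f χ) := by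
  induction n generalizing χ t with
  | zero =>
    exact M.pullback_satAux_iff hf hqf hcl hM (u := fun _ _ => False) (u' := fun _ _ => False)
      (fun _ _ _ => Iff.rfl) (Nat.le_succ_of_le hχ) t
  | succ n ih => exact M.pullback_satAux_iff hf hqf hcl hM (fun s _ hδ => ih hδ s) hχ t

end EAS

theorem Valid.bind {φ : Fm} (hv : Valid φ) {f : ℕ → Fm} (hqf : ∀ p, Fm.qcount (f p) = 0)
    (hcl : ∀ p, Fm.free (f p) = ∅) (hf : ∀ r, ∃ p, f p = .prop r) : Valid (Fm.bind f φ) := by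
  intro W M hagpp hka s hs
  have hpull := hv W (M.pullback f hf) (M.pullback_agpp hf) (M.pullback_ka hf hka) s
    ((M.props_subset_pullback_L_iff hf).2 hs)
  rw [EAS.sat, Fm.qcount_bind hqf]
  exact (M.pullback_satN_iff hf hqf hcl hagpp _ le_rfl s).1 hpull

theorem stmt4_general (φ : Fm) (hv : Valid φ)
    (q : ℕ) (ψ : Fm) (hqf : Fm.qcount ψ = 0) (hψs : Fm.free ψ = ∅) :
    Valid (Fm.substP q ψ φ) := by
  obtain ⟨N, hN⟩ := (Fm.props_finite φ).bddAbove
  -- `f` agrees with `[q/ψ]` on the atoms of `φ`; the atoms `≥ K` are shifted down onto all atoms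
  set K := max N q + 1
  let f : ℕ → Fm := fun p => if p = q then ψ else if p < K then .prop p else .prop (p - K)
  have hf_qcount : ∀ p, Fm.qcount (f p) = 0 := fun p => by
    simp only [f]; split_ifs <;> simp [Fm.qcount, hqf]
  have hf_free : ∀ p, Fm.free (f p) = ∅ := fun p => by
    simp only [f]; split_ifs <;> simp [Fm.free, hψs]
  have hf_surj : ∀ r, ∃ p, f p = .prop r := fun r =>
    ⟨r + K, by simp only [f]; rw [if_neg (by omega), if_neg (by omega), Nat.add_sub_cancel]⟩
  have hsubst : Fm.substP q ψ φ = Fm.bind f φ := by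
    rw [Fm.substP_eq_bind]
    refine Fm.bind_congr fun p hp => ?_
    have : p < K := Nat.lt_succ_of_le ((hN hp).trans (le_max_left N q))
    simp only [f, if_pos this]
  rw [hsubst]
  exact hv.bind hf_qcount hf_free hf_surj

/-- Weak Substitution: if the sentence `φ` is valid, `q` is a primitive proposition,
and `ψ` is a quantifier-free sentence not mentioning `q`, then `φ[q/ψ]` is valid. -/
theorem stmt4 (φ : Fm) (hsent : Fm.free φ = ∅) (hv : Valid φ)
    (q : ℕ) (ψ : Fm) (hqf : Fm.qcount ψ = 0) (hψs : Fm.free ψ = ∅)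
    (hq : q ∉ Fm.props ψ) :
    Valid (Fm.substP q ψ φ) :=
  stmt4_general φ hv q ψ hqf hψs

end AwarenessPaper
end

section
/- (Soundness of Modus Ponens for weak validity) If Φ is countably infinite and both φ ⇒ ψ and φ are valid sentences in the class of all extended awareness structures over Φ, then ψ is valid in that class. -/
namespace AwarenessPaper

/-!
Renaming primitive propositions along a surjection `τ : ℕ → ℕ` pulls an extended awareness
structure `M` back to one (`M.comap hτ`) that again satisfies agpp and ka and in which `χ` holds
exactly where `χ.rename τ` holds in `M`; so validity is preserved by such renamings. Given a
world `s` whose language contains the primitive propositions of `ψ`, choose `τ` fixing those of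
`ψ` and sending the remaining primitive propositions of `φ` to some `p ∈ L s`. Then `φ ⇒ ψ` and
`φ` renamed along `τ` are both defined, hence true, at `s`, and modus ponens at `s` gives
`ψ.rename τ = ψ`.
-/

namespace Fm

lemma props_finite_s6 (χ : Fm) : χ.props.Finite := by
  induction χ <;> simp_all [props]

lemma props_rename (τ : ℕ → ℕ) (χ : Fm) : (χ.rename τ).props = τ '' χ.props := by
  induction χ <;> simp_all [rename, props, Set.image_union]

lemma qcount_rename (τ : ℕ → ℕ) (χ : Fm) : (χ.rename τ).qcount = χ.qcount := by
  induction χ <;> simp_all [rename, qcount]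

lemma free_rename (τ : ℕ → ℕ) (χ : Fm) : (χ.rename τ).free = χ.free := by
  induction χ <;> simp_all [rename, free]

lemma rename_substV (τ : ℕ → ℕ) (v : ℕ) (β χ : Fm) :
    (substV v β χ).rename τ = substV v (β.rename τ) (χ.rename τ) := by
  induction χ <;> simp_all [substV, rename, apply_ite]

lemma rename_rename_of_rightInverse {σ τ : ℕ → ℕ} (h : Function.RightInverse σ τ) (χ : Fm) :
    (χ.rename σ).rename τ = χ := by
  have h' : ∀ p, τ (σ p) = p := h
  induction χ <;> simp_all [rename]

lemma rename_eq_self {τ : ℕ → ℕ} {χ : Fm} (h : Set.EqOn τ id χ.props) : χ.rename τ = χ := by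
  induction χ <;> simp_all [rename, props, Set.eqOn_union]

lemma qcount_substV (v : ℕ) {β : Fm} (hβ : β.qcount = 0) (χ : Fm) :
    (substV v β χ).qcount = χ.qcount := by
  induction χ <;> simp_all [substV, qcount, apply_ite]

lemma props_imp (φ ψ : Fm) : (imp φ ψ).props = φ.props ∪ ψ.props := by
  simp [imp, or, props]

lemma qcount_imp (φ ψ : Fm) : (imp φ ψ).qcount = max φ.qcount ψ.qcount := by
  simp [imp, or, qcount]

lemma rename_imp (τ : ℕ → ℕ) (φ ψ : Fm) : (imp φ ψ).rename τ = imp (φ.rename τ) (ψ.rename τ) :=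
  rfl

/-- Renaming along a surjection does not change the range of a quantifier. -/
lemma forall_sentence_rename_iff {τ : ℕ → ℕ} (hτ : Function.Surjective τ) (L : Set ℕ)
    (P : Fm → Prop) :
    (∀ β : Fm, β.qcount = 0 → β.free = ∅ → (β.rename τ).props ⊆ L → P (β.rename τ)) ↔
      ∀ β : Fm, β.qcount = 0 → β.free = ∅ → β.props ⊆ L → P β := by
  have hσ := rename_rename_of_rightInverse (Function.rightInverse_surjInv hτ)
  constructor
  · intro H β hq hf hL
    simpa only [hσ] using H (β.rename (Function.surjInv hτ))
      (by rwa [qcount_rename]) (by rwa [free_rename]) (by rwa [hσ])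
  · intro H β hq hf hL
    exact H _ (by rwa [qcount_rename]) (by rwa [free_rename]) hL

end Fm

lemma exists_surjective_eqOn_mapsTo {A B L : Set ℕ} (hA : A.Finite) (hB : B.Finite)
    (hAL : A ⊆ L) (hL : L.Nonempty) :
    ∃ τ : ℕ → ℕ, Function.Surjective τ ∧ Set.EqOn τ id A ∧ Set.MapsTo τ B L := by
  classical
  obtain ⟨p, hp⟩ := hL
  obtain ⟨N, hN⟩ := (hA.union hB).bddAbove
  have hbound : ∀ n ∈ A ∪ B, n < N + 1 := fun n hn => Nat.lt_succ_of_le (hN hn)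
  -- everything below `N + 1` outside `A` collapses to `p`; the shift `n ↦ n - (N + 1)` above it
  -- restores surjectivity
  refine ⟨fun n => if n ∈ A then n else if n < N + 1 then p else n - (N + 1), ?_, ?_, ?_⟩
  · intro m
    by_cases hm : m ∈ A
    · exact ⟨m, if_pos hm⟩
    · have hmA : m + (N + 1) ∉ A := fun h => by
        have := hbound _ (Or.inl h)
        omega
      exact ⟨m + (N + 1), by simp [hmA, show ¬m + (N + 1) < N + 1 by omega]⟩
  · intro n hn
    simp [hn]
  · intro n hn
    by_cases hnA : n ∈ A
    · simpa [hnA] using hAL hnA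
    · simpa [hnA, hbound n (Or.inr hn)] using hp

namespace EAS

variable {W : Type}

lemma satAux_congr (M : EAS W) {u₁ u₂ : W → Fm → Prop} {k : ℕ}
    (H : ∀ t χ, χ.qcount < k → (u₁ t χ ↔ u₂ t χ)) {χ : Fm} (hχ : χ.qcount ≤ k) (t : W) :
    M.satAux u₁ t χ ↔ M.satAux u₂ t χ := by
  induction χ generalizing t with
  | prop | var | a => rfl
  | neg χ ih => simp only [satAux, ih hχ]
  | and χ₁ χ₂ ih₁ ih₂ =>
    simp only [Fm.qcount, max_le_iff] at hχ
    simp only [satAux, ih₁ hχ.1, ih₂ hχ.2]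
  | k i χ ih => simp only [satAux, ih hχ]
  | x i χ ih => simp only [satAux, ih hχ]
  | all v χ ih =>
    simp only [Fm.qcount] at hχ
    simp only [satAux]
    refine and_congr_right fun _ => forall_congr' fun β => imp_congr_right fun hβ => ?_
    exact imp_congr_right fun _ => imp_congr_right fun _ =>
      H t _ (by rw [Fm.qcount_substV v hβ]; omega)

lemma satN_iff_satN_of_le (M : EAS W) {k n : ℕ} (hkn : k ≤ n) {χ : Fm} (hχ : χ.qcount ≤ k)
    (t : W) : M.satN n t χ ↔ M.satN k t χ := by
  induction k generalizing n χ t with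
  | zero =>
    cases n with
    | zero => rfl
    | succ m => exact M.satAux_congr (k := 0) (fun _ _ h => absurd h (Nat.not_lt_zero _)) hχ t
  | succ k ih =>
    obtain ⟨m, rfl⟩ := Nat.exists_eq_add_of_le' (Nat.lt_of_lt_of_le k.succ_pos hkn)
    exact M.satAux_congr (k := k + 1) (fun t' χ' h => ih (by omega) (by omega) t') hχ t

lemma satN_iff_sat (M : EAS W) {n : ℕ} {χ : Fm} (hχ : χ.qcount ≤ n) (t : W) :
    M.satN n t χ ↔ M.sat t χ :=
  M.satN_iff_satN_of_le hχ le_rfl t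

lemma exists_satN_eq_satAux_s6 (M : EAS W) (n : ℕ) : ∃ u, M.satN n = M.satAux u := by
  cases n <;> exact ⟨_, rfl⟩

lemma satAux_of_satAux_imp (M : EAS W) {u : W → Fm → Prop} {s : W} {φ ψ : Fm}
    (himp : M.satAux u s (Fm.imp φ ψ)) (hφ : M.satAux u s φ) (hψL : ψ.props ⊆ M.L s) :
    M.satAux u s ψ := by
  simp only [Fm.imp, Fm.or, satAux] at himp
  by_contra hψ
  exact himp.2 ⟨⟨fun p hp => himp.1 (Or.inl hp), fun h => h.2 hφ⟩, hψL, hψ⟩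

lemma sat_of_sat_imp (M : EAS W) {s : W} {φ ψ : Fm} (himp : M.sat s (Fm.imp φ ψ))
    (hφ : M.sat s φ) (hψL : ψ.props ⊆ M.L s) : M.sat s ψ := by
  have hq := Fm.qcount_imp φ ψ
  rw [← M.satN_iff_sat (hq ▸ le_max_left _ _)] at hφ
  rw [← M.satN_iff_sat (hq ▸ le_max_right _ _)]
  obtain ⟨u, hu⟩ := M.exists_satN_eq_satAux_s6 (Fm.imp φ ψ).qcount
  rw [sat, hu] at himp
  rw [hu] at hφ ⊢
  exact M.satAux_of_satAux_imp himp hφ hψL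

/-- Surjectivity of `τ` is what keeps the local languages nonempty and makes the quantifiers of
`M.comap hτ` range over renamings of exactly the sentences `M`'s quantifiers range over. -/
def comap (M : EAS W) {τ : ℕ → ℕ} (hτ : Function.Surjective τ) : EAS W where
  L t := τ ⁻¹' M.L t
  L_ne t := by
    obtain ⟨p, hp⟩ := M.L_ne t
    obtain ⟨r, rfl⟩ := hτ p
    exact ⟨r, hp⟩
  val t r := M.val t (τ r)
  R := M.R
  Aw i t := {χ | χ.rename τ ∈ M.Aw i t}
  Aw_lang i t χ hχ := by
    simpa [Fm.props_rename, Set.image_subset_iff] using M.Aw_lang i t _ hχ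

lemma agpp.comap {M : EAS W} {τ : ℕ → ℕ} (hτ : Function.Surjective τ) (h : M.agpp) :
    (M.comap hτ).agpp := by
  intro i t χ
  change χ.rename τ ∈ M.Aw i t ↔ ∀ p ∈ χ.props, Fm.prop (τ p) ∈ M.Aw i t
  rw [h i t, Fm.props_rename, Set.forall_mem_image]

lemma ka.comap {M : EAS W} {τ : ℕ → ℕ} (hτ : Function.Surjective τ) (h : M.ka) :
    (M.comap hτ).ka := by
  intro i s t hst
  change {χ | _ ∈ M.Aw i s} = {χ | _ ∈ M.Aw i t}
  rw [h i s t hst]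

section comap

variable (M : EAS W) {τ : ℕ → ℕ} (hτ : Function.Surjective τ)

lemma props_subset_comap_L_iff (t : W) (χ : Fm) :
    χ.props ⊆ (M.comap hτ).L t ↔ (χ.rename τ).props ⊆ M.L t := by
  rw [Fm.props_rename, Set.image_subset_iff]
  rfl

lemma satAux_comap_iff {u₁ u₂ : W → Fm → Prop} (hu : ∀ t χ, u₁ t χ ↔ u₂ t (χ.rename τ))
    (χ : Fm) (t : W) : (M.comap hτ).satAux u₁ t χ ↔ M.satAux u₂ t (χ.rename τ) := by
  induction χ generalizing t with
  | prop | var | a => rfl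
  | neg χ ih => simp only [Fm.rename, satAux, props_subset_comap_L_iff, ih]
  | and χ₁ χ₂ ih₁ ih₂ => simp only [Fm.rename, satAux, ih₁, ih₂]
  | k i χ ih => simp only [Fm.rename, satAux, props_subset_comap_L_iff, ih]; rfl
  | x i χ ih => simp only [Fm.rename, satAux, props_subset_comap_L_iff, ih]; rfl
  | all v χ ih =>
    simp only [Fm.rename, satAux, props_subset_comap_L_iff, hu, Fm.rename_substV]
    exact and_congr_right fun _ => Fm.forall_sentence_rename_iff hτ (M.L t)
      (fun β => u₂ t (Fm.substV v β (χ.rename τ)))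

lemma satN_comap_iff (n : ℕ) (t : W) (χ : Fm) :
    (M.comap hτ).satN n t χ ↔ M.satN n t (χ.rename τ) := by
  induction n generalizing t χ with
  | zero => exact M.satAux_comap_iff hτ (u₁ := fun _ _ => False) (fun _ _ => Iff.rfl) χ t
  | succ m ih => exact M.satAux_comap_iff hτ (u₁ := (M.comap hτ).satN m) (ih · ·) χ t

lemma sat_comap_iff (t : W) (χ : Fm) : (M.comap hτ).sat t χ ↔ M.sat t (χ.rename τ) := by
  rw [sat, sat, Fm.qcount_rename]
  exact M.satN_comap_iff hτ _ t χ

end comap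

end EAS

lemma Valid.sat_rename {χ : Fm} (h : Valid χ) {W : Type} {M : EAS W} (hagpp : M.agpp)
    (hka : M.ka) {τ : ℕ → ℕ} (hτ : Function.Surjective τ) {s : W}
    (hs : Set.MapsTo τ χ.props (M.L s)) : M.sat s (χ.rename τ) :=
  (M.sat_comap_iff hτ s χ).mp (h W _ (hagpp.comap hτ) (hka.comap hτ) s hs.subset_preimage)

theorem stmt6_general (φ ψ : Fm)
    (himp : Valid (Fm.imp φ ψ)) (hφ : Valid φ) :
    Valid ψ := by
  intro W M hagpp hka s hψL
  obtain ⟨τ, hτ, hτψ, hτφ⟩ := exists_surjective_eqOn_mapsTo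
    (Fm.props_finite_s6 ψ) (Fm.props_finite_s6 φ) hψL (M.L_ne s)
  have hψτ : ψ.rename τ = ψ := Fm.rename_eq_self hτψ
  have hψs : Set.MapsTo τ ψ.props (M.L s) := fun p hp => (hτψ hp).symm ▸ hψL hp
  have h_imp : M.sat s (Fm.imp (φ.rename τ) ψ) := by
    rw [← hψτ, ← Fm.rename_imp]
    exact himp.sat_rename hagpp hka hτ (by rw [Fm.props_imp]; exact hτφ.union hψs)
  exact M.sat_of_sat_imp h_imp (hφ.sat_rename hagpp hka hτ hτφ) hψL

/-- Soundness of modus ponens for weak validity. -/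
theorem stmt6 (φ ψ : Fm) (hφs : Fm.free φ = ∅) (hψs : Fm.free ψ = ∅)
    (himp : Valid (Fm.imp φ ψ)) (hφ : Valid φ) :
    Valid ψ :=
  stmt6_general φ ψ himp hφ

end AwarenessPaper
end

section
/- (Uncertainty about full awareness is satisfiable) There exists an extended awareness structure M (satisfying agpp and ka, with an equivalence-relation K_i) and a world s such that agent i considers possible a world t₁ where A_i(s) contains every quantifier-free sentence over L(t₁) and a world t₂ where some quantifier-free sentence over L(t₂) is not in A_i(s); consequently (M,s) ⊨ ¬K_i ¬∀x A_i x ∧ ¬K_i ∀x A_i x. -/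
namespace AwarenessPaper

/- `∀x A_i x` holds at a world exactly when the agent is aware of every
quantifier-free sentence of that world's language, and by ka awareness is the same at `s` and at
all its successors. So if `s` sees a world with a small language that `A_i(s)` covers and a world
with a larger language that it does not, both `∀x A_i x` and its negation are considered possible.
This needs world-dependent languages: with a single language the two requirements contradict. -/

namespace EAS

variable {W : Type} (M : EAS W)

theorem satN_all_aware_iff (n i v : ℕ) (s : W) :
    M.satN (n + 1) s (.all v (.a i (.var v))) ↔
      ∀ β : Fm, β.qcount = 0 → β.free = ∅ → β.props ⊆ M.L s → β ∈ M.Aw i s := by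
  have hprops : Fm.props (.a i (.var v)) ⊆ M.L s := by simp [Fm.props]
  have hsubst (β : Fm) : Fm.substV v β (.a i (.var v)) = .a i β := by simp [Fm.substV]
  cases n <;> simp only [satN, satAux, hsubst, hprops, true_and]

theorem sat_uncertain_full_awareness (hka : M.ka) {i : ℕ} {s t₁ t₂ : W}
    (hst₁ : M.R i s t₁) (hst₂ : M.R i s t₂)
    (hfull : ∀ β : Fm, β.qcount = 0 → β.free = ∅ → β.props ⊆ M.L t₁ → β ∈ M.Aw i s)
    (hmiss : ∃ β : Fm, β.qcount = 0 ∧ β.free = ∅ ∧ β.props ⊆ M.L t₂ ∧ β ∉ M.Aw i s) :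
    M.sat s (Fm.and (.neg (.k i (.neg (.all 0 (.a i (.var 0))))))
                    (.neg (.k i (.all 0 (.a i (.var 0)))))) := by
  have hprops (t : W) : Fm.props (.all 0 (.a i (.var 0))) ⊆ M.L t := by simp [Fm.props]
  have hfull₁ : M.satN 1 t₁ (.all 0 (.a i (.var 0))) := by
    rw [satN_all_aware_iff, ← hka i s t₁ hst₁]
    exact hfull
  have hmiss₂ : ¬ M.satN 1 t₂ (.all 0 (.a i (.var 0))) := by
    rw [satN_all_aware_iff, ← hka i s t₂ hst₂]
    obtain ⟨β, hq, hf, hL, hβ⟩ := hmiss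
    exact fun h => hβ (h β hq hf hL)
  refine ⟨⟨hprops s, fun ⟨_, hknow⟩ => (hknow t₁ hst₁).2 hfull₁⟩,
    ⟨hprops s, fun ⟨_, hknow⟩ => hmiss₂ (hknow t₂ hst₂)⟩⟩

end EAS

def twoLanguageModel : EAS Bool where
  L b := if b then {0, 1} else {0}
  L_ne b := by cases b <;> simp
  val _ _ := true
  R _ _ _ := True
  Aw _ _ := {φ | φ.props ⊆ {0}}
  Aw_lang _ b _ hφ := hφ.trans (by cases b <;> simp)

theorem twoLanguageModel_agpp : twoLanguageModel.agpp := by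
  intro i s φ
  simp [twoLanguageModel, Fm.props, Set.subset_def]

theorem twoLanguageModel_ka : twoLanguageModel.ka := fun _ _ _ _ => rfl

/-- Uncertainty about full awareness is satisfiable: there is an extended awareness
structure satisfying agpp and ka with an equivalence relation `R i`, a world `s`, and
successors `t₁`, `t₂` such that `A_i(s)` contains all quantifier-free sentences over
`L(t₁)` but misses some quantifier-free sentence over `L(t₂)`; consequently
`(M,s) ⊨ ¬K_i ¬∀x A_i x ∧ ¬K_i ∀x A_i x`. -/
theorem stmt14 : ∃ (W : Type) (M : EAS W) (i : ℕ) (s t₁ t₂ : W),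
    M.agpp ∧ M.ka ∧ Equivalence (M.R i) ∧ M.R i s t₁ ∧ M.R i s t₂ ∧
    (∀ β : Fm, Fm.qcount β = 0 → Fm.free β = ∅ → Fm.props β ⊆ M.L t₁ → β ∈ M.Aw i s) ∧
    (∃ β : Fm, Fm.qcount β = 0 ∧ Fm.free β = ∅ ∧ Fm.props β ⊆ M.L t₂ ∧ β ∉ M.Aw i s) ∧
    M.sat s (Fm.and (.neg (.k i (.neg (.all 0 (.a i (.var 0))))))
                    (.neg (.k i (.all 0 (.a i (.var 0)))))) := by
  have hfull : ∀ β : Fm, β.qcount = 0 → β.free = ∅ →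
      β.props ⊆ twoLanguageModel.L false → β ∈ twoLanguageModel.Aw 0 false :=
    fun _ _ _ hβ => hβ
  have hmiss : ∃ β : Fm, β.qcount = 0 ∧ β.free = ∅ ∧
      β.props ⊆ twoLanguageModel.L true ∧ β ∉ twoLanguageModel.Aw 0 false :=
    ⟨.prop 1, rfl, rfl, by simp [twoLanguageModel, Fm.props], by simp [twoLanguageModel, Fm.props]⟩
  exact ⟨Bool, twoLanguageModel, 0, false, false, true, twoLanguageModel_agpp,
    twoLanguageModel_ka, ⟨fun _ => trivial, fun _ => trivial, fun _ _ => trivial⟩, trivial, trivial,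
    hfull, hmiss, twoLanguageModel.sat_uncertain_full_awareness twoLanguageModel_ka trivial trivial
      hfull hmiss⟩

end AwarenessPaper
end

section
/- (Lindenbaum lemma for acceptable sets) If Φ is countably infinite, L ⊆ Φ, and Γ is a set of sentences over L that is AX-consistent and acceptable with respect to L, then Γ can be extended to a set of sentences over L that is both acceptable and maximal AX-consistent with respect to L. -/
/-!
Enumerate the sentences over `L` so that each one comes with every bound `k`. At stage `(χ, k)`
the current set is extended by `χ` if that is consistent; otherwise, if `χ = ∀x φ`, the set does
not prove `∀x φ`, so by acceptability it fails to prove `φ[x/q]` for infinitely many `q ∈ L`,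
and one such `¬φ[x/q]` with `q ≥ k` is added. Every stage stays acceptable, because
`Γ ∪ {χ} ⊢ ψ` iff `Γ ⊢ χ → ψ`, and for a sentence `χ` the axioms `K_∀` and `N_∀` turn
`Γ ⊢ ∀x (χ → φ)` into `Γ ∪ {χ} ⊢ ∀x φ`. The union is consistent by compactness, maximal by
construction, and acceptable because a universal sentence outside it has counterexamples
beyond every bound.
-/

namespace AwarenessPaper

namespace Fm

/-- Primitive propositions of a formula, as a list. -/
def propList : Fm → List ℕ
  | .prop p => [p]
  | .var _ => []
  | .neg φ => propList φ
  | .and φ ψ => propList φ ++ propList ψ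
  | .k _ φ => propList φ
  | .a _ φ => propList φ
  | .x _ φ => propList φ
  | .all _ φ => propList φ

def top : Fm := Fm.or (.prop 0) (.neg (.prop 0))
def bot : Fm := .neg top

/-- Boolean evaluation of the propositional skeleton of a formula, treating
everything other than `¬` and `∧` as an atom.  `∀ v, beval v φ = true` says
exactly that `φ` is a substitution instance of a propositional tautology. -/
def beval (v : Fm → Bool) : Fm → Bool
  | .neg φ => ! beval v φ
  | .and φ ψ => beval v φ && beval v ψ
  | φ => v φ

end Fm

/-- Conjunction of a list of formulas (the empty conjunction is `⊤`). -/
def conj : List Fm → Fm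
  | [] => Fm.top
  | φ :: l => Fm.and φ (conj l)

/-- The theorems of the axiom system `AX^{X,A,∀}_e`:
Prop, AGPP, XA, FA*_X, K_X, A0_X, 1_∀, K_∀, N_∀, Barcan*_X, MP, Gen_X, Gen_∀. -/
inductive Thm : Fm → Prop
  | taut (φ : Fm) (h : ∀ v : Fm → Bool, Fm.beval v φ = true) : Thm φ
  | agppAx (i : ℕ) (φ : Fm) :
      Thm (Fm.iff (.a i φ) (conj ((Fm.propList φ).map fun p => Fm.a i (.prop p))))
  | xaAx (i : ℕ) (φ : Fm) : Thm (Fm.imp (.a i φ) (.x i (.a i φ)))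
  | faAx (i x : ℕ) :
      Thm (Fm.imp (.all x (.neg (.a i (.var x)))) (.x i (.all x (.neg (.a i (.var x))))))
  | kAx (i : ℕ) (φ ψ : Fm) :
      Thm (Fm.imp (.and (.x i φ) (.x i (Fm.imp φ ψ))) (.x i ψ))
  | a0Ax (i : ℕ) (φ : Fm) : Thm (Fm.imp (.x i φ) (.a i φ))
  | oneAll (x : ℕ) (φ ψ : Fm) (h1 : Fm.qcount ψ = 0) (h2 : Fm.free ψ = ∅) :
      Thm (Fm.imp (.all x φ) (Fm.substV x ψ φ))
  | kAll (x : ℕ) (φ ψ : Fm) :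
      Thm (Fm.imp (.all x (Fm.imp φ ψ)) (Fm.imp (.all x φ) (.all x ψ)))
  | nAll (x : ℕ) (φ : Fm) (h : x ∉ Fm.free φ) : Thm (Fm.imp φ (.all x φ))
  | barcanAx (i x : ℕ) (φ : Fm) :
      Thm (Fm.imp (.and (.a i (.all x φ)) (.all x (Fm.imp (.a i (.var x)) (.x i φ))))
                  (.x i (Fm.imp (.all x (.a i (.var x))) (.all x φ))))
  | mp (φ ψ : Fm) : Thm (Fm.imp φ ψ) → Thm φ → Thm ψ
  | genX (i : ℕ) (φ : Fm) : Thm φ → Thm (Fm.imp (.a i φ) (.x i φ))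
  | genAll (x q : ℕ) (φ : Fm) : Thm φ → Thm (.all x (Fm.substP q (.var x) φ))

/-- `Γ ⊢ φ`: derivable from finitely many members of `Γ` and theorems of
`AX^{X,A,∀}_e` by modus ponens. -/
def Derivable (Γ : Set Fm) (φ : Fm) : Prop :=
  ∃ l : List Fm, (∀ ψ ∈ l, ψ ∈ Γ) ∧ Thm (Fm.imp (conj l) φ)

def Consistent (Γ : Set Fm) : Prop := ¬ Derivable Γ Fm.bot

/-- `Γ` is acceptable with respect to `L`: whenever `φ` is a formula over `L`
with (at most) the free variable `x` and `Γ ⊢ φ[x/q]` for all but finitely many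
primitive propositions `q ∈ L`, then `Γ ⊢ ∀x φ`. -/
def Acceptable (Γ : Set Fm) (L : Set ℕ) : Prop :=
  ∀ (x : ℕ) (φ : Fm), Fm.props φ ⊆ L → Fm.free φ ⊆ {x} →
    {q ∈ L | ¬ Derivable Γ (Fm.substV x (.prop q) φ)}.Finite →
    Derivable Γ (.all x φ)

/-- `Γ` is a maximal consistent set of sentences with respect to `L`. -/
def MaxConsistent (Γ : Set Fm) (L : Set ℕ) : Prop :=
  (∀ φ ∈ Γ, Fm.props φ ⊆ L ∧ Fm.free φ = ∅) ∧ Consistent Γ ∧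
    ∀ φ : Fm, Fm.props φ ⊆ L → Fm.free φ = ∅ → Consistent (insert φ Γ) → φ ∈ Γ

namespace Fm

def code : Fm → ℕ
  | .prop p => Nat.pair 0 p
  | .var v => Nat.pair 1 v
  | .neg φ => Nat.pair 2 φ.code
  | .and φ ψ => Nat.pair 3 (Nat.pair φ.code ψ.code)
  | .k i φ => Nat.pair 4 (Nat.pair i φ.code)
  | .a i φ => Nat.pair 5 (Nat.pair i φ.code)
  | .x i φ => Nat.pair 6 (Nat.pair i φ.code)
  | .all v φ => Nat.pair 7 (Nat.pair v φ.code)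

theorem code_injective : Function.Injective code := by
  intro φ
  induction φ <;> intro ψ <;> cases ψ <;> simp_all [code, Nat.pair_eq_pair] <;> aesop

instance : Countable Fm := code_injective.countable

instance : Nonempty Fm := ⟨.prop 0⟩

theorem substV_of_notMem_free {x : ℕ} {t φ : Fm} (h : x ∉ free φ) : substV x t φ = φ := by
  induction φ <;> grind [substV, free]

theorem free_substV_subset (x : ℕ) (t φ : Fm) : free (substV x t φ) ⊆ free φ \ {x} ∪ free t := by
  induction φ <;> grind [substV, free]

theorem props_substV_subset (x : ℕ) (t φ : Fm) : props (substV x t φ) ⊆ props φ ∪ props t := by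
  induction φ <;> grind [substV, props]

@[simp] theorem beval_imp_eq_true (v : Fm → Bool) (φ ψ : Fm) :
    beval v (imp φ ψ) = true ↔ (beval v φ = true → beval v ψ = true) := by
  simp only [imp, Fm.or, beval]
  cases beval v φ <;> simp

@[simp] theorem beval_bot (v : Fm → Bool) : beval v bot = false := by
  cases h : v (.prop 0) <;> simp [bot, top, Fm.or, beval, h]

end Fm

@[simp] theorem beval_conj_eq_true (v : Fm → Bool) (l : List Fm) :
    Fm.beval v (conj l) = true ↔ ∀ ψ ∈ l, Fm.beval v ψ = true := by
  induction l with
  | nil => simp [conj, Fm.top, Fm.or, Fm.beval]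
  | cons φ l ih => simp [conj, Fm.beval, ih]

theorem Thm.of_beval_imp {φ ψ : Fm} (hsem : ∀ v, Fm.beval v φ = true → Fm.beval v ψ = true)
    (h : Thm φ) : Thm ψ :=
  Thm.mp φ ψ (Thm.taut _ fun v => by simpa using hsem v) h

namespace Derivable

variable {Γ Δ : Set Fm} {φ ψ : Fm}

theorem of_beval_imp (hsem : ∀ v, Fm.beval v φ = true → Fm.beval v ψ = true)
    (h : Derivable Γ φ) : Derivable Γ ψ :=
  let ⟨l, hl, t⟩ := h
  ⟨l, hl, t.of_beval_imp fun v => by simpa using fun h₁ h₂ => hsem v (h₁ h₂)⟩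

theorem of_thm (h : Thm φ) : Derivable Γ φ :=
  ⟨[], by simp, h.of_beval_imp fun v => by simp_all⟩

theorem of_mem (h : φ ∈ Γ) : Derivable Γ φ :=
  ⟨[φ], by simpa using h, Thm.taut _ fun v => by simp⟩

theorem mono (h : Derivable Γ φ) (hΓΔ : Γ ⊆ Δ) : Derivable Δ φ :=
  let ⟨l, hl, t⟩ := h
  ⟨l, fun ψ hψ => hΓΔ (hl ψ hψ), t⟩

theorem mp (hφψ : Derivable Γ (Fm.imp φ ψ)) (hφ : Derivable Γ φ) : Derivable Γ ψ := by
  obtain ⟨l₁, hl₁, t₁⟩ := hφψ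
  obtain ⟨l₂, hl₂, t₂⟩ := hφ
  refine ⟨l₁ ++ l₂, by simpa [or_imp, forall_and] using And.intro hl₁ hl₂, ?_⟩
  refine Thm.mp _ _ (t₁.of_beval_imp fun v h₁ => ?_) t₂
  simp only [Fm.beval_imp_eq_true, beval_conj_eq_true, List.mem_append] at h₁ ⊢
  exact fun h₂ h₁₂ => h₁ (fun ψ hψ => h₁₂ ψ (.inl hψ)) (h₂ fun ψ hψ => h₁₂ ψ (.inr hψ))

theorem not_consistent (hφ : Derivable Γ φ) (hnφ : Derivable Γ (.neg φ)) : ¬ Consistent Γ :=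
  fun hΓ => hΓ <| ((of_thm (Thm.taut (Fm.imp φ (Fm.imp (.neg φ) Fm.bot)) fun v => by
    cases h : Fm.beval v φ <;> simp [Fm.beval, h])).mp hφ).mp hnφ

end Derivable

theorem derivable_insert_iff {Γ : Set Fm} {χ φ : Fm} :
    Derivable (insert χ Γ) φ ↔ Derivable Γ (Fm.imp χ φ) := by
  classical
  constructor
  · rintro ⟨l, hl, t⟩
    refine ⟨l.filter (· ≠ χ), fun ψ hψ => ?_, t.of_beval_imp fun v h => ?_⟩
    · have ⟨hψl, hψχ⟩ := List.mem_filter.1 hψ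
      exact (hl ψ hψl).resolve_left (by simpa using hψχ)
    · simp only [Fm.beval_imp_eq_true, beval_conj_eq_true, List.mem_filter] at h ⊢
      exact fun hl' hχ => h fun ψ hψ => if hψχ : ψ = χ then hψχ ▸ hχ else hl' ψ ⟨hψ, by simpa⟩
  · exact fun h => (h.mono (Set.subset_insert χ Γ)).mp (.of_mem (Set.mem_insert χ Γ))

theorem consistent_insert_iff {Γ : Set Fm} {χ : Fm} :
    Consistent (insert χ Γ) ↔ ¬ Derivable Γ (.neg χ) := by
  rw [Consistent, derivable_insert_iff]
  refine not_congr ⟨.of_beval_imp fun v => ?_, .of_beval_imp fun v => ?_⟩ <;>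
    cases h : Fm.beval v χ <;> simp [Fm.beval, h]

theorem consistent_insert_neg {Γ : Set Fm} {φ : Fm} (h : ¬ Derivable Γ φ) :
    Consistent (insert (.neg φ) Γ) :=
  consistent_insert_iff.2 fun hnn => h <| hnn.of_beval_imp fun v => by simp [Fm.beval]

theorem consistent_iUnion {ι : Type*} [Nonempty ι] {Θ : ι → Set Fm}
    (hdir : Directed (· ⊆ ·) Θ) (hΘ : ∀ i, Consistent (Θ i)) : Consistent (⋃ i, Θ i) := by
  classical
  rintro ⟨l, hl, t⟩
  obtain ⟨i, hi⟩ := hdir.exists_mem_subset_of_finset_subset_biUnion (s := l.toFinset)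
    fun ψ hψ => hl ψ (List.mem_toFinset.1 hψ)
  exact hΘ i ⟨l, fun ψ hψ => hi (List.mem_toFinset.2 hψ), t⟩

def Sentence (L : Set ℕ) (φ : Fm) : Prop := Fm.props φ ⊆ L ∧ Fm.free φ = ∅

theorem sentence_all_iff {L : Set ℕ} {x : ℕ} {φ : Fm} :
    Sentence L (.all x φ) ↔ Fm.props φ ⊆ L ∧ Fm.free φ ⊆ {x} := by
  simp [Sentence, Fm.props, Fm.free, Set.sdiff_eq_empty]

theorem sentence_neg_substV {L : Set ℕ} {x q : ℕ} {φ : Fm} (hp : Fm.props φ ⊆ L)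
    (hf : Fm.free φ ⊆ {x}) (hq : q ∈ L) : Sentence L (.neg (Fm.substV x (.prop q) φ)) := by
  refine ⟨(Fm.props_substV_subset x _ φ).trans ?_, Set.subset_empty_iff.1 <|
    (Fm.free_substV_subset x _ φ).trans ?_⟩
  · simpa [Fm.props, Set.insert_subset_iff] using And.intro hq hp
  · simpa [Fm.free, Set.sdiff_eq_empty] using hf

theorem Acceptable.insert {Θ : Set Fm} {L : Set ℕ} {χ : Fm} (hΘ : Acceptable Θ L)
    (hχ : Sentence L χ) : Acceptable (insert χ Θ) L := by
  intro x φ hp hf hfin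
  have hx : x ∉ Fm.free χ := by simp [hχ.2]
  have hall : Derivable Θ (.all x (Fm.imp χ φ)) := by
    refine hΘ x _ (Set.union_subset hχ.1 hp) ?_ (hfin.subset fun q ⟨hqL, hq⟩ => ⟨hqL, ?_⟩)
    · simpa [Fm.imp, Fm.or, Fm.free, hχ.2] using hf
    have hsubst : Fm.substV x (.prop q) (Fm.imp χ φ) = Fm.imp χ (Fm.substV x (.prop q) φ) := by
      simp [Fm.imp, Fm.or, Fm.substV, Fm.substV_of_notMem_free hx]
    exact fun hd => hq (hsubst ▸ derivable_insert_iff.1 hd)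
  exact ((Derivable.of_thm (Thm.kAll x χ φ)).mp (hall.mono (Set.subset_insert χ Θ))).mp
    ((Derivable.of_thm (Thm.nAll x χ hx)).mp (.of_mem (Set.mem_insert χ Θ)))

theorem Acceptable.exists_not_derivable_ge {Θ : Set Fm} {L : Set ℕ} {x : ℕ} {φ : Fm}
    (hΘ : Acceptable Θ L) (hp : Fm.props φ ⊆ L) (hf : Fm.free φ ⊆ {x})
    (hφ : ¬ Derivable Θ (.all x φ)) (k : ℕ) :
    ∃ q ∈ L, k ≤ q ∧ ¬ Derivable Θ (Fm.substV x (.prop q) φ) := by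
  obtain ⟨q, ⟨hqL, hq⟩, hkq⟩ :=
    (Set.not_finite.1 fun hfin => hφ (hΘ x φ hp hf hfin)).exists_gt k
  exact ⟨q, hqL, hkq.le, hq⟩

structure IsAcceptableTheory (L : Set ℕ) (Θ : Set Fm) : Prop where
  sentence : ∀ φ ∈ Θ, Sentence L φ
  consistent : Consistent Θ
  acceptable : Acceptable Θ L

theorem IsAcceptableTheory.insert_of_consistent {L : Set ℕ} {Θ : Set Fm} {χ : Fm}
    (hΘ : IsAcceptableTheory L Θ) (hχ : Sentence L χ) (hc : Consistent (insert χ Θ)) :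
    IsAcceptableTheory L (insert χ Θ) :=
  ⟨Set.forall_mem_insert.2 ⟨hχ, hΘ.sentence⟩, hc, hΘ.acceptable.insert hχ⟩

/-- What stage `(χ, k)` of the construction secures. Since every `χ` is met with every bound `k`,
a universal sentence left out of the limit is refuted at infinitely many `q`, which is what
makes the limit acceptable. -/
def Decides (L : Set ℕ) (χ : Fm) (k : ℕ) (Θ : Set Fm) : Prop :=
  Sentence L χ → (χ ∈ Θ ∨ Derivable Θ (.neg χ)) ∧
    ∀ x φ, χ = .all x φ → χ ∈ Θ ∨ ∃ q ∈ L, k ≤ q ∧ Fm.neg (Fm.substV x (.prop q) φ) ∈ Θ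

theorem Decides.mono {L : Set ℕ} {χ : Fm} {k : ℕ} {Θ Θ' : Set Fm} (h : Decides L χ k Θ)
    (hΘ : Θ ⊆ Θ') : Decides L χ k Θ' := fun hχ =>
  ⟨(h hχ).1.imp (@hΘ χ) (·.mono hΘ),
    fun x φ he => ((h hχ).2 x φ he).imp (@hΘ χ) fun ⟨q, hqL, hkq, hq⟩ => ⟨q, hqL, hkq, hΘ hq⟩⟩

theorem IsAcceptableTheory.exists_decides {L : Set ℕ} {Θ : Set Fm}
    (hΘ : IsAcceptableTheory L Θ) (χ : Fm) (k : ℕ) :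
    ∃ Θ', IsAcceptableTheory L Θ' ∧ Θ ⊆ Θ' ∧ Decides L χ k Θ' := by
  by_cases hadd : Sentence L χ ∧ Consistent (insert χ Θ)
  · exact ⟨_, hΘ.insert_of_consistent hadd.1 hadd.2, Set.subset_insert χ Θ,
      fun _ => ⟨.inl (Set.mem_insert χ Θ), fun _ _ _ => .inl (Set.mem_insert χ Θ)⟩⟩
  have hrefute : Sentence L χ → Derivable Θ (.neg χ) := fun hχ =>
    not_not.1 fun h => hadd ⟨hχ, consistent_insert_iff.2 h⟩
  by_cases hall : ∃ x φ, χ = .all x φ ∧ Sentence L χ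
  · obtain ⟨x, φ, rfl, hχ⟩ := hall
    obtain ⟨hp, hf⟩ := sentence_all_iff.1 hχ
    have hnd : ¬ Derivable Θ (.all x φ) := fun hd => hd.not_consistent (hrefute hχ) hΘ.consistent
    obtain ⟨q, hqL, hkq, hq⟩ := hΘ.acceptable.exists_not_derivable_ge hp hf hnd k
    refine ⟨_, hΘ.insert_of_consistent (sentence_neg_substV hp hf hqL) (consistent_insert_neg hq),
      Set.subset_insert _ Θ, fun _ => ⟨.inr ((hrefute hχ).mono (Set.subset_insert _ Θ)), ?_⟩⟩
    rintro y ψ ⟨⟩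
    exact .inr ⟨q, hqL, hkq, Set.mem_insert _ Θ⟩
  · exact ⟨Θ, hΘ, subset_rfl, fun hχ =>
      ⟨.inr (hrefute hχ), fun x φ he => absurd ⟨x, φ, he, hχ⟩ hall⟩⟩

section Limit

variable {L : Set ℕ} {Δ : Set Fm}

theorem maxConsistent_of_decides (hsent : ∀ φ ∈ Δ, Sentence L φ) (hcons : Consistent Δ)
    (hdec : ∀ χ, Decides L χ 0 Δ) : MaxConsistent Δ L :=
  ⟨hsent, hcons, fun χ hp hf hc => ((hdec χ ⟨hp, hf⟩).1).resolve_right fun hneg =>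
    (Derivable.of_mem (Set.mem_insert χ Δ)).not_consistent (hneg.mono (Set.subset_insert χ Δ)) hc⟩

theorem acceptable_of_decides (hcons : Consistent Δ) (hdec : ∀ χ k, Decides L χ k Δ) :
    Acceptable Δ L := by
  intro x φ hp hf hfin
  by_cases hmem : .all x φ ∈ Δ
  · exact .of_mem hmem
  obtain ⟨B, hB⟩ := hfin.bddAbove
  obtain ⟨q, hqL, hBq, hq⟩ :=
    ((hdec _ (B + 1) (sentence_all_iff.2 ⟨hp, hf⟩)).2 x φ rfl).resolve_left hmem
  have hqB : q ≤ B := hB ⟨hqL, fun hd => hd.not_consistent (.of_mem hq) hcons⟩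
  omega

end Limit

theorem exists_seq_of_forall_exists {α : Type*} {P : α → Prop} {R : ℕ → α → α → Prop} {a : α}
    (ha : P a) (h : ∀ n a, P a → ∃ b, P b ∧ R n a b) :
    ∃ f : ℕ → α, f 0 = a ∧ ∀ n, P (f n) ∧ R n (f n) (f (n + 1)) := by
  choose g hgP hgR using h
  let f : ℕ → {b // P b} := fun n => Nat.rec ⟨a, ha⟩ (fun n b => ⟨g n b.1 b.2, hgP n b.1 b.2⟩) n
  exact ⟨fun n => (f n).1, rfl, fun n => ⟨(f n).2, hgR n (f n).1 (f n).2⟩⟩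

/-- Lindenbaum lemma for acceptable sets: an acceptable consistent set of sentences
over `L` extends to an acceptable maximal consistent set with respect to `L`. -/
theorem stmt17 (L : Set ℕ) (Γ : Set Fm)
    (hΓ : ∀ φ ∈ Γ, Fm.props φ ⊆ L ∧ Fm.free φ = ∅)
    (hcons : Consistent Γ) (hacc : Acceptable Γ L) :
    ∃ Δ : Set Fm, Γ ⊆ Δ ∧ Acceptable Δ L ∧ MaxConsistent Δ L := by
  obtain ⟨g, hg⟩ := exists_surjective_nat Fm
  obtain ⟨Θ, hΘ₀, hΘ⟩ := exists_seq_of_forall_exists (P := IsAcceptableTheory L)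
    (R := fun n Θ Θ' => Θ ⊆ Θ' ∧ Decides L (g n.unpair.1) n.unpair.2 Θ') ⟨hΓ, hcons, hacc⟩
    fun n Θ h => h.exists_decides _ _
  have hmono : Monotone Θ := monotone_nat_of_le_succ fun n => (hΘ n).2.1
  have hconsΔ : Consistent (⋃ n, Θ n) :=
    consistent_iUnion hmono.directed_le fun n => (hΘ n).1.consistent
  have hdec : ∀ χ k, Decides L χ k (⋃ n, Θ n) := by
    intro χ k
    obtain ⟨m, rfl⟩ := hg χ
    simpa using (hΘ (Nat.pair m k)).2.2.mono (Set.subset_iUnion Θ _)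
  refine ⟨⋃ n, Θ n, hΘ₀ ▸ Set.subset_iUnion Θ 0, acceptable_of_decides hconsΔ hdec,
    maxConsistent_of_decides ?_ hconsΔ (hdec · 0)⟩
  simpa using fun φ n => (hΘ n).1.sentence φ

end AwarenessPaper
end
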